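/- arXiv:2109.06145 — 5 statements merged into one kernel-verified Lean document; each statement's English description precedes it below -/
import Mathlib

section
/- Let G be a finite group, N an abelian normal subgroup of G, and B : N → N → ℂˣ a G-invariant alternating bicharacter. Let a, b ∈ N (so that the conjugates gbg⁻¹ and g⁻¹ag lie in N, which is contained in the centralizers Z_a and Z_b respectively). Let α be a finite-dimensional complex representation of Z_a with character χ_α satisfying χ_α(h) = B(a,h)·(dim α) for all h ∈ N, and let β be a finite-dimensional complex representation of Z_b with χ_β(h) = B(b,h)·(dim β) for all h ∈ N. Then for every g ∈ G, χ_α(gbg⁻¹)·χ_β(g⁻¹ag) = (dim α)·(dim β). -/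
/-!
On `N` both characters are scalar multiples of the dimension, so the product equals
`B(a, gbg⁻¹) · B(b, g⁻¹ag) · dim α · dim β`. Conjugating by `g` turns `B(b, g⁻¹ag)` into
`B(gbg⁻¹, a)`, and an alternating bicharacter is antisymmetric: `B(x, y) · B(y, x) = 1`.
-/

open scoped Classical

/-- The character of a representation `α` of the centralizer of `a`, extended by zero
to a function on all of `G`. -/
noncomputable def chiExt {G V : Type*} [Group G] [AddCommGroup V] [Module ℂ V]
    (a : G) (α : Representation ℂ (Subgroup.centralizer {a}) V) (x : G) : ℂ :=
  if hx : x ∈ Subgroup.centralizer {a} then LinearMap.trace ℂ V (α ⟨x, hx⟩) else 0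

theorem mul_swap_eq_one_of_alternating {M K : Type*} [Mul M] [Monoid K] (B : M → M → K)
    (hB1 : ∀ x y z : M, B (x * y) z = B x z * B y z)
    (hB2 : ∀ x y z : M, B x (y * z) = B x y * B x z)
    (hB3 : ∀ x : M, B x x = 1) (x y : M) :
    B x y * B y x = 1 := by
  have h := hB3 (x * y)
  rwa [hB1, hB2, hB2, hB3 x, hB3 y, one_mul, mul_one] at h

theorem chi_mul_chi_eq_dim_mul_dim_general {G : Type*} [Group G]
    (N : Subgroup G) (hN : N.Normal)
    (B : ↥N → ↥N → ℂˣ)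
    (hB1 : ∀ h₁ h₂ h : ↥N, B (h₁ * h₂) h = B h₁ h * B h₂ h)
    (hB2 : ∀ h h₁ h₂ : ↥N, B h (h₁ * h₂) = B h h₁ * B h h₂)
    (hB3 : ∀ h : ↥N, B h h = 1)
    (hBinv : ∀ (g : G) (h₁ h₂ : ↥N),
      B ⟨g * (h₁ : G) * g⁻¹, hN.conj_mem (h₁ : G) h₁.2 g⟩
        ⟨g * (h₂ : G) * g⁻¹, hN.conj_mem (h₂ : G) h₂.2 g⟩ = B h₁ h₂)
    {V W : Type*} [AddCommGroup V] [Module ℂ V]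
    [AddCommGroup W] [Module ℂ W]
    (a b : G) (ha : a ∈ N) (hb : b ∈ N)
    (α : Representation ℂ (Subgroup.centralizer {a}) V)
    (β : Representation ℂ (Subgroup.centralizer {b}) W)
    (hχα : ∀ h : ↥N, chiExt a α (h : G) = (B ⟨a, ha⟩ h : ℂ) * (Module.finrank ℂ V : ℂ))
    (hχβ : ∀ h : ↥N, chiExt b β (h : G) = (B ⟨b, hb⟩ h : ℂ) * (Module.finrank ℂ W : ℂ)) :
    ∀ g : G, chiExt a α (g * b * g⁻¹) * chiExt b β (g⁻¹ * a * g) =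
      (Module.finrank ℂ V : ℂ) * (Module.finrank ℂ W : ℂ) := by
  intro g
  let a' : ↥N := ⟨a, ha⟩
  let gbg : ↥N := ⟨g * b * g⁻¹, hN.conj_mem b hb g⟩
  let gag : ↥N := ⟨g⁻¹ * a * g, hN.conj_mem' a ha g⟩
  have hconj : B ⟨b, hb⟩ gag = B gbg a' := by
    rw [← hBinv g ⟨b, hb⟩ gag]
    congr
    simp [gag, mul_assoc]
  have hswap := congrArg Units.val (mul_swap_eq_one_of_alternating B hB1 hB2 hB3 a' gbg)
  rw [Units.val_mul, Units.val_one] at hswap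
  rw [hχα gbg, hχβ gag, hconj]
  linear_combination (Module.finrank ℂ V * Module.finrank ℂ W : ℂ) * hswap

/-- For a finite group `G`, an abelian normal subgroup `N`, a `G`-invariant
alternating bicharacter `B` on `N`, and representations `α` of `Z_a`, `β` of `Z_b`
(`a, b ∈ N`) whose characters restrict on `N` to `B(a,·)·dim α` resp. `B(b,·)·dim β`,
one has `χ_α(g b g⁻¹) · χ_β(g⁻¹ a g) = dim α · dim β` for every `g ∈ G`. -/
theorem chi_mul_chi_eq_dim_mul_dim {G : Type*} [Group G] [Finite G]
    (N : Subgroup G) (hN : N.Normal) (hcomm : ∀ x ∈ N, ∀ y ∈ N, x * y = y * x)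
    (B : ↥N → ↥N → ℂˣ)
    (hB1 : ∀ h₁ h₂ h : ↥N, B (h₁ * h₂) h = B h₁ h * B h₂ h)
    (hB2 : ∀ h h₁ h₂ : ↥N, B h (h₁ * h₂) = B h h₁ * B h h₂)
    (hB3 : ∀ h : ↥N, B h h = 1)
    (hBinv : ∀ (g : G) (h₁ h₂ : ↥N),
      B ⟨g * (h₁ : G) * g⁻¹, hN.conj_mem (h₁ : G) h₁.2 g⟩
        ⟨g * (h₂ : G) * g⁻¹, hN.conj_mem (h₂ : G) h₂.2 g⟩ = B h₁ h₂)
    {V W : Type*} [AddCommGroup V] [Module ℂ V] [FiniteDimensional ℂ V]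
    [AddCommGroup W] [Module ℂ W] [FiniteDimensional ℂ W]
    (a b : G) (ha : a ∈ N) (hb : b ∈ N)
    (α : Representation ℂ (Subgroup.centralizer {a}) V)
    (β : Representation ℂ (Subgroup.centralizer {b}) W)
    (hχα : ∀ h : ↥N, chiExt a α (h : G) = (B ⟨a, ha⟩ h : ℂ) * (Module.finrank ℂ V : ℂ))
    (hχβ : ∀ h : ↥N, chiExt b β (h : G) = (B ⟨b, hb⟩ h : ℂ) * (Module.finrank ℂ W : ℂ)) :
    ∀ g : G, chiExt a α (g * b * g⁻¹) * chiExt b β (g⁻¹ * a * g) =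
      (Module.finrank ℂ V : ℂ) * (Module.finrank ℂ W : ℂ) :=
  chi_mul_chi_eq_dim_mul_dim_general N hN B hB1 hB2 hB3 hBinv a b ha hb α β hχα hχβ
end

section
/- Let H be a finite group, N a normal subgroup of H, and λ : N →* ℂˣ an H-invariant character, i.e. λ(hnh⁻¹) = λ(n) for all h ∈ H and n ∈ N. In the monoid algebra ℂ[H], the element e_λ := |N|⁻¹ · Σ_{n ∈ N} λ(n)⁻¹ • n is a central idempotent, and the left ideal ℂ[H]·e_λ (the range of right multiplication by e_λ) has dimension [H : N] over ℂ. -/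
/-- The central idempotent `e_λ = |N|⁻¹ · Σ_{n ∈ N} λ(n)⁻¹ • n` in the group algebra `ℂ[H]`
attached to a character `λ` of a subgroup `N`. -/
noncomputable def centralIdem {H : Type*} [Group H] (N : Subgroup H) [Fintype ↥N]
    (lam : ↥N →* ℂˣ) : MonoidAlgebra ℂ H :=
  (Fintype.card ↥N : ℂ)⁻¹ •
    ∑ n : ↥N, (((lam n)⁻¹ : ℂˣ) : ℂ) • MonoidAlgebra.of ℂ H (n : H)

/-!
Every `n ∈ N` acts on `e_λ` by the scalar `λ(n)`, so `e_λ` averages `|N|` copies of itself and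
is idempotent; `H`-invariance of `λ` makes `e_λ` fixed under conjugation, hence central. Right
multiplication by `e_λ` is then a projection onto `ℂ[H]·e_λ`, whose rank is its trace. In the
basis `H`, the diagonal entries of right multiplication by `x` are all equal to the coefficient
of `x` at `1`, so the trace is `|H| · |N|⁻¹ = [H : N]`.
-/

open LinearMap MonoidAlgebra

theorem MonoidAlgebra.trace_mulRight {k G : Type*} [CommRing k] [Group G] [Fintype G]
    (x : k[G]) : trace k k[G] (mulRight k x) = Fintype.card G • x.coeff 1 := by
  classical
  rw [trace_eq_matrix_trace k (basis G k), Matrix.trace]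
  have hdiag (g : G) : toMatrix (basis G k) (basis G k) (mulRight k x) g g = x.coeff 1 := by
    rw [toMatrix_apply, basis_apply, mulRight_apply]
    exact (coeff_single_mul_apply x 1 g g).trans (by simp)
  simp [hdiag]

theorem LinearMap.finrank_range_mulRight {K A : Type*} [Field K] [Ring A] [Algebra K A]
    [FiniteDimensional K A] {e : A} (he : IsIdempotentElem e) :
    (Module.finrank K (range (mulRight K e)) : K) = trace K A (mulRight K e) := by
  have hproj : IsIdempotentElem (mulRight K e) := by
    ext x
    simp [mul_assoc, he.eq]
  exact hproj.isProj_range.trace.symm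

section CentralIdem

variable {H : Type*} [Group H] (N : Subgroup H) [Fintype N] (lam : N →* ℂˣ)

theorem of_mul_centralIdem (n : N) :
    of ℂ H n * centralIdem N lam = (lam n : ℂ) • centralIdem N lam := by
  have hsum : of ℂ H n * ∑ m : N, (((lam m)⁻¹ : ℂˣ) : ℂ) • of ℂ H m =
      (lam n : ℂ) • ∑ m : N, (((lam m)⁻¹ : ℂˣ) : ℂ) • of ℂ H m := by
    rw [Finset.mul_sum, Finset.smul_sum]
    refine Fintype.sum_equiv (Equiv.mulLeft n) _ _ fun m => ?_
    simp [← Units.val_mul]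
  rw [centralIdem, mul_smul_comm, hsum, smul_comm]

theorem isIdempotentElem_centralIdem : IsIdempotentElem (centralIdem N lam) := by
  have hcard : (Fintype.card N : ℂ) ≠ 0 := by exact_mod_cast Fintype.card_ne_zero
  calc centralIdem N lam * centralIdem N lam
      = (Fintype.card N : ℂ)⁻¹ •
          ∑ n : N, (((lam n)⁻¹ : ℂˣ) : ℂ) • (of ℂ H n * centralIdem N lam) := by
        rw [centralIdem, smul_mul_assoc, Finset.sum_mul]
        simp_rw [smul_mul_assoc]
    _ = (Fintype.card N : ℂ)⁻¹ • ∑ _n : N, centralIdem N lam := by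
        simp only [of_mul_centralIdem, smul_smul, Units.inv_mul, one_smul]
    _ = centralIdem N lam := by
        rw [Finset.sum_const, Finset.card_univ, ← Nat.cast_smul_eq_nsmul ℂ, smul_smul,
          inv_mul_cancel₀ hcard, one_smul]

theorem coeff_one_centralIdem : (centralIdem N lam).coeff 1 = (Fintype.card N : ℂ)⁻¹ := by
  classical
  rw [centralIdem, coeff_smul_apply, coeff_sum, Finset.sum_apply', Finset.sum_eq_single 1]
  · simp
  · intro n _ hn
    simp [of_apply, hn]
  · simp

theorem trace_mulRight_centralIdem [Fintype H] :
    trace ℂ (MonoidAlgebra ℂ H) (mulRight ℂ (centralIdem N lam)) = N.index := by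
  have hcard : (Fintype.card N : ℂ) ≠ 0 := by exact_mod_cast Fintype.card_ne_zero
  rw [MonoidAlgebra.trace_mulRight, coeff_one_centralIdem, nsmul_eq_mul,
    ← Nat.card_eq_fintype_card, ← N.card_mul_index, Nat.card_eq_fintype_card (α := N)]
  push_cast
  field_simp

variable {N} in
theorem of_commute_centralIdem (hN : N.Normal)
    (hinv : ∀ (h : H) (n : N), lam ⟨h * n * h⁻¹, hN.conj_mem n n.2 h⟩ = lam n) (h : H) :
    Commute (of ℂ H h) (centralIdem N lam) := by
  have hconj (n : N) : lam (MulAut.conjNormal h n) = lam n := hinv h n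
  rw [Commute, SemiconjBy, centralIdem, mul_smul_comm, smul_mul_assoc, Finset.mul_sum,
    Finset.sum_mul]
  congr 1
  refine Fintype.sum_equiv (MulAut.conjNormal h).toEquiv _ _ fun n => ?_
  simp [hconj]

variable {N} in
theorem centralIdem_commute (hN : N.Normal)
    (hinv : ∀ (h : H) (n : N), lam ⟨h * n * h⁻¹, hN.conj_mem n n.2 h⟩ = lam n)
    (x : MonoidAlgebra ℂ H) : Commute (centralIdem N lam) x := by
  induction x using MonoidAlgebra.induction_on with
  | of h => exact (of_commute_centralIdem lam hN hinv h).symm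
  | add x y hx hy => exact hx.add_right hy
  | smul r x hx => exact hx.smul_right r

end CentralIdem

/-- for a finite group `H`, a normal subgroup `N`, and an `H`-invariant
character `λ : N →* ℂˣ`, the element `e_λ = |N|⁻¹ Σ_{n∈N} λ(n)⁻¹ • n` of `ℂ[H]` is a
central idempotent, and the left ideal `ℂ[H]·e_λ` (the range of right multiplication
by `e_λ`) has dimension `[H : N]` over `ℂ`. -/
theorem centralIdem_isIdempotent_central_finrank_range
    {H : Type*} [Group H] [Fintype H] (N : Subgroup H) (hN : N.Normal) [Fintype ↥N]
    (lam : ↥N →* ℂˣ)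
    (hinv : ∀ (h : H) (n : ↥N),
      lam ⟨h * (n : H) * h⁻¹, hN.conj_mem (n : H) n.2 h⟩ = lam n) :
    centralIdem N lam * centralIdem N lam = centralIdem N lam ∧
    (∀ x : MonoidAlgebra ℂ H, centralIdem N lam * x = x * centralIdem N lam) ∧
    Module.finrank ℂ
        ↥(LinearMap.range (LinearMap.mulRight ℂ (centralIdem N lam))) = N.index := by
  have hidem := isIdempotentElem_centralIdem N lam
  refine ⟨hidem.eq, fun x => (centralIdem_commute lam hN hinv x).eq, ?_⟩
  exact_mod_cast (finrank_range_mulRight hidem).trans (trace_mulRight_centralIdem N lam)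
end

section
/- Let G be a group and ω : G → G → G → ℂˣ a 3-cocycle, i.e. ω(h,k,l)·ω(g,hk,l)·ω(g,h,k) = ω(gh,k,l)·ω(g,h,kl) for all g,h,k,l ∈ G, and define β_z(g,h) := ω(g,h,z) · ω(ghzh⁻¹g⁻¹, g, h) · ω(g, hzh⁻¹, h)⁻¹. Then for every z ∈ G, the restriction of β_z to the centralizer Z_z = {x ∈ G | xz = zx} is a 2-cocycle: β_z(g,h)·β_z(gh,k) = β_z(h,k)·β_z(g,hk) for all g, h, k ∈ Z_z. -/
/-- The structure constant `β_z(g,h) = ω(g,h,z)·ω(g h z h⁻¹ g⁻¹, g, h)·ω(g, h z h⁻¹, h)⁻¹`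
appearing in the multiplication of the twisted quantum double `D^ω G`. -/
def betaTQD {G : Type*} [Group G] (ω : G → G → G → ℂˣ) (z g h : G) : ℂˣ :=
  ω g h z * ω (g * h * z * h⁻¹ * g⁻¹) g h * (ω g (h * z * h⁻¹) h)⁻¹

/-- if `ω` is a 3-cocycle on `G`, then for every `z ∈ G` the restriction
of `β_z` to the centralizer `Z_z = {x | x z = z x}` is a 2-cocycle:
`β_z(g,h)·β_z(gh,k) = β_z(h,k)·β_z(g,hk)` for `g, h, k ∈ Z_z`. -/
theorem betaTQD_two_cocycle_on_centralizer {G : Type*} [Group G] (ω : G → G → G → ℂˣ)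
    (hω : ∀ g h k l : G,
      ω h k l * ω g (h * k) l * ω g h k = ω (g * h) k l * ω g h (k * l)) :
    ∀ z g h k : G, g * z = z * g → h * z = z * h → k * z = z * k →
      betaTQD ω z g h * betaTQD ω z (g * h) k =
        betaTQD ω z h k * betaTQD ω z g (h * k) := by
  intro z g h k hg hh hk
  have Hg : ∀ x : G, g * (z * x) = z * (g * x) := fun x => by rw [← mul_assoc, hg, mul_assoc]
  have Hh : ∀ x : G, h * (z * x) = z * (h * x) := fun x => by rw [← mul_assoc, hh, mul_assoc]
  have Hk : ∀ x : G, k * (z * x) = z * (k * x) := fun x => by rw [← mul_assoc, hk, mul_assoc]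
  simp only [betaTQD, mul_assoc, Hg, Hh, Hk, mul_inv_cancel_left, mul_inv_cancel, mul_one,
    inv_mul_cancel, mul_inv_rev]
  have C1 := hω g h k z; rw [hk] at C1
  have C2 := hω g h z k; rw [hh] at C2
  have C3 := hω g z h k; rw [hg] at C3
  have C4 := hω z g h k
  rw [Units.ext_iff] at C1 C2 C3 C4 ⊢
  push_cast at C1 C2 C3 C4 ⊢
  field_simp
  have hF : ((ω g h k : ℂ) * (ω g (z * h) k : ℂ) * (ω g h (z * k) : ℂ) * (ω (z * g) h k : ℂ)) ≠ 0 :=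
    mul_ne_zero (mul_ne_zero (mul_ne_zero (Units.ne_zero _) (Units.ne_zero _)) (Units.ne_zero _)) (Units.ne_zero _)
  apply mul_right_cancel₀ hF
  linear_combination C2 * ((((ω g h k : ℂ))*((ω z (g*h) k : ℂ))*((ω z g h : ℂ)))*(((ω (g*h) k z : ℂ))*((ω g h (z*k) : ℂ)))*(((ω (z*g) h k : ℂ))*((ω g z (h*k) : ℂ)))) + C4 * ((((ω (g*h) z k : ℂ))*((ω g h (z*k) : ℂ)))*(((ω (g*h) k z : ℂ))*((ω g h (z*k) : ℂ)))*(((ω (z*g) h k : ℂ))*((ω g z (h*k) : ℂ)))) - C1 * ((((ω z h k : ℂ))*((ω g (z*h) k : ℂ))*((ω g z h : ℂ)))*(((ω (g*h) z k : ℂ))*((ω g h (z*k) : ℂ)))*(((ω (z*g) h k : ℂ))*((ω z g (h*k) : ℂ)))) - C3 * ((((ω (g*h) k z : ℂ))*((ω g h (z*k) : ℂ)))*(((ω (g*h) z k : ℂ))*((ω g h (z*k) : ℂ)))*(((ω (z*g) h k : ℂ))*((ω z g (h*k) : ℂ))))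
end

section
/- In the ℤ₂ toric code condensation model, every coherent state is a simultaneous eigenvector of the creation operators: for all parameters g₀ ∈ ZMod 2 and h, g : Fin N → ZMod 2, and every n, W_n(e) ψ_{g₀;h,g} = (−1)^{g₀ + g_n} ψ_{g₀;h,g}, where the exponent is computed modulo 2. -/
/-- The effective Hilbert space of the ℤ₂ toric code condensation model with `N` anyon
sites: functions from (condensate label, per-site (charge, flux)) to `ℂ`. -/
abbrev Hsp (N : ℕ) : Type := (ZMod 2 × (Fin N → ZMod 2 × ZMod 2)) → ℂ

/-- The creation operator `W_n(e)`: `(W_n(e) f)(a, j) = f(a+1, j')` where `j'` agrees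
with `j` except that the charge at site `n` is shifted by 1. -/
noncomputable def wOp (N : ℕ) (n : Fin N) : Hsp N →ₗ[ℂ] Hsp N :=
  LinearMap.funLeft ℂ ℂ
    (fun p => (p.1 + 1, Function.update p.2 n ((p.2 n).1 + 1, (p.2 n).2)))

/-- The coherent state `ψ_{g₀;h,g}` of the toric code condensation model:
`ψ(a,j) = 2^{−(N+1)/2} · (−1)^{g₀·a} · ∏_n (if φ_n = h_n then (−1)^{g_n·c_n} else 0)`. -/
noncomputable def coh (N : ℕ) (g0 : ZMod 2) (h g : Fin N → ZMod 2) : Hsp N :=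
  fun p => (((2 : ℝ) ^ (-(((N : ℝ) + 1) / 2)) : ℝ) : ℂ) *
    (-1 : ℂ) ^ (g0.val * p.1.val) *
    ∏ n : Fin N,
      (if (p.2 n).2 = h n then (-1 : ℂ) ^ ((g n).val * ((p.2 n).1).val) else 0)

/-!
`W_n(e)` shifts the condensate label `a` and the charge `c_n` by one and leaves every flux
alone. The coherent state is, up to normalisation, the character `(−1)^{g₀·a}` times a product of
site factors, and at site `n` the factor is either the character `(−1)^{g_n·c_n}` or zero, according
to the flux. Each shift therefore multiplies the state by `(−1)^{g₀}`, resp. `(−1)^{g_n}`.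
-/

section NegOnePow

variable {R : Type*} [Ring R]

theorem neg_one_pow_zmod_two_val_add (x y : ZMod 2) :
    (-1 : R) ^ (x + y).val = (-1) ^ x.val * (-1) ^ y.val := by
  rw [ZMod.val_add, ← neg_one_pow_eq_pow_mod_two, pow_add]

theorem neg_one_pow_zmod_two_val_mul (x y : ZMod 2) :
    (-1 : R) ^ (x * y).val = (-1) ^ (x.val * y.val) := by
  rw [ZMod.val_mul, ← neg_one_pow_eq_pow_mod_two]

theorem neg_one_pow_zmod_two_val_mul_add_one (x y : ZMod 2) :
    (-1 : R) ^ (x.val * (y + 1).val) = (-1) ^ x.val * (-1) ^ (x.val * y.val) := by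
  rw [← neg_one_pow_zmod_two_val_mul, ← neg_one_pow_zmod_two_val_mul, mul_add_one, add_comm,
    neg_one_pow_zmod_two_val_add]

end NegOnePow

theorem Fintype.prod_apply_update_eq_mul {ι α M : Type*} [Fintype ι] [DecidableEq ι]
    [CommMonoid M] (f : ι → α → M) (j : ι → α) (n : ι) (x : α) (c : M)
    (hx : f n x = c * f n (j n)) :
    ∏ m, f m (Function.update j n x m) = c * ∏ m, f m (j m) := by
  rw [Fintype.prod_eq_mul_prod_compl n, Fintype.prod_eq_mul_prod_compl n (fun m => f m (j m)),
    Function.update_self, hx, mul_assoc]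
  congr 2
  refine Finset.prod_congr rfl fun m hm => ?_
  rw [Function.update_of_ne (by simpa using hm)]

noncomputable def cohSiteFactor (hm gm : ZMod 2) (q : ZMod 2 × ZMod 2) : ℂ :=
  if q.2 = hm then (-1) ^ (gm.val * q.1.val) else 0

theorem cohSiteFactor_charge_add_one (hm gm : ZMod 2) (q : ZMod 2 × ZMod 2) :
    cohSiteFactor hm gm (q.1 + 1, q.2) = (-1) ^ gm.val * cohSiteFactor hm gm q := by
  unfold cohSiteFactor
  split_ifs
  · exact neg_one_pow_zmod_two_val_mul_add_one gm q.1
  · rw [mul_zero]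

theorem wOp_coh_eigen_general (N : ℕ)
    (g0 : ZMod 2) (h g : Fin N → ZMod 2) (n : Fin N) :
    wOp N n (coh N g0 h g) = ((-1 : ℂ) ^ ((g0 + g n).val)) • coh N g0 h g := by
  funext ⟨a, j⟩
  change _ * _ * ∏ m, cohSiteFactor (h m) (g m) (Function.update j n ((j n).1 + 1, (j n).2) m)
    = _ * (_ * _ * ∏ m, cohSiteFactor (h m) (g m) (j m))
  rw [Fintype.prod_apply_update_eq_mul (fun m => cohSiteFactor (h m) (g m)) j n _ _
      (cohSiteFactor_charge_add_one (h n) (g n) (j n)),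
    neg_one_pow_zmod_two_val_mul_add_one, neg_one_pow_zmod_two_val_add]
  ring

/-- every coherent state is a simultaneous eigenvector of the creation
operators: `W_n(e) ψ_{g₀;h,g} = (−1)^{g₀+g_n} ψ_{g₀;h,g}`. -/
theorem wOp_coh_eigen (N : ℕ) (hN : 1 ≤ N)
    (g0 : ZMod 2) (h g : Fin N → ZMod 2) (n : Fin N) :
    wOp N n (coh N g0 h g) = ((-1 : ℂ) ^ ((g0 + g n).val)) • coh N g0 h g :=
  wOp_coh_eigen_general N g0 h g n
end

section
/- In the ℤ₂ toric code condensation model, the global symmetry operator U_g maps coherent states to coherent states by shifting all coherent parameters: for every g ∈ ZMod 2 and all parameters g₀ ∈ ZMod 2, h, g_• : Fin N → ZMod 2, U_g ψ_{g₀; h, g_•} = ψ_{g+g₀; h, (g+g_n)_n}. -/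
/-- The diagonal operator of multiplication by `c`. -/
noncomputable def diagOp {X : Type*} (c : X → ℂ) : (X → ℂ) →ₗ[ℂ] (X → ℂ) where
  toFun f := fun x => c x * f x
  map_add' f g := by funext x; simp [mul_add]
  map_smul' r f := by funext x; simp [smul_eq_mul]; ring

/-- The global symmetry operator `(U_g f)(a,j) = (−1)^{g·(a + Σ_n c_n)} f(a,j)`. -/
noncomputable def uOp (N : ℕ) (g : ZMod 2) : Hsp N →ₗ[ℂ] Hsp N :=
  diagOp (fun p => (-1 : ℂ) ^ ((g * (p.1 + ∑ n : Fin N, (p.2 n).1)).val))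

/-! The sign `x ↦ (-1) ^ x.val` is a character of `ZMod 2`, so the phase of `U_g` splits into a
factor `(-1) ^ (g a)` and one factor `(-1) ^ (g c_n)` per site; each is absorbed by shifting the
corresponding phase parameter of the coherent state. -/

namespace ZMod

variable {R : Type*}

theorem neg_one_pow_val_add [Ring R] (x y : ZMod 2) :
    (-1 : R) ^ (x + y).val = (-1) ^ x.val * (-1) ^ y.val := by
  rw [← pow_add, neg_one_pow_eq_pow_mod_two (x.val + y.val), ← val_add]

theorem neg_one_pow_val_mul [Ring R] (x y : ZMod 2) :
    (-1 : R) ^ (x * y).val = (-1) ^ (x.val * y.val) := by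
  rw [val_mul, ← neg_one_pow_eq_pow_mod_two]

theorem neg_one_pow_val_sum [CommRing R] {ι : Type*} (s : Finset ι) (f : ι → ZMod 2) :
    (-1 : R) ^ (∑ i ∈ s, f i).val = ∏ i ∈ s, (-1) ^ (f i).val := by
  classical
  induction s using Finset.induction_on with
  | empty => simp
  | insert i s hi ih => rw [Finset.sum_insert hi, Finset.prod_insert hi, neg_one_pow_val_add, ih]

theorem neg_one_pow_val_mul_mul_neg_one_pow [Ring R] (x y z : ZMod 2) :
    (-1 : R) ^ (x * z).val * (-1) ^ (y.val * z.val) = (-1) ^ ((x + y).val * z.val) := by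
  rw [← neg_one_pow_val_mul, ← neg_one_pow_val_mul, ← neg_one_pow_val_add, add_mul]

end ZMod

theorem uOp_coh_general (N : ℕ) (g g0 : ZMod 2) (h gv : Fin N → ZMod 2) :
    uOp N g (coh N g0 h gv) = coh N (g + g0) h (fun n => g + gv n) := by
  funext p
  simp only [uOp, diagOp, coh, LinearMap.coe_mk, AddHom.coe_mk]
  have hsite : ∀ n : Fin N,
      (-1 : ℂ) ^ (g * (p.2 n).1).val *
        (if (p.2 n).2 = h n then (-1 : ℂ) ^ ((gv n).val * (p.2 n).1.val) else 0) =
      if (p.2 n).2 = h n then (-1 : ℂ) ^ ((g + gv n).val * (p.2 n).1.val) else 0 := by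
    intro n
    rw [mul_ite, mul_zero, ZMod.neg_one_pow_val_mul_mul_neg_one_pow]
  rw [mul_add, ZMod.neg_one_pow_val_add, Finset.mul_sum, ZMod.neg_one_pow_val_sum,
    ← ZMod.neg_one_pow_val_mul_mul_neg_one_pow g g0, ← Finset.prod_congr rfl fun n _ => hsite n,
    Finset.prod_mul_distrib]
  ring

/-- the global symmetry operator `U_g` maps coherent states to coherent
states by shifting all coherent parameters:
`U_g ψ_{g₀;h,g_•} = ψ_{g+g₀;h,(g+g_n)_n}`. -/
theorem uOp_coh (N : ℕ) (hN : 1 ≤ N) (g g0 : ZMod 2) (h gv : Fin N → ZMod 2) :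
    uOp N g (coh N g0 h gv) = coh N (g + g0) h (fun n => g + gv n) :=
  uOp_coh_general N g g0 h gv
end
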